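/- arXiv:2106.11781 — 3 statements merged into one kernel-verified Lean document; each statement's English description precedes it below -/
import Mathlib

section
/- Every finite group of order n with gcd(n, φ(n)) = 1 is cyclic. -/
/-!
Coprimality of `n` and `φ n` forces `n` to be squarefree, so every Sylow subgroup of `G` is cyclic
(`G` is a Z-group) and hence so are the commutator subgroup `G'` and the abelianization `G ⧸ G'`.
Conjugation maps `G` into `Aut G'`, whose order `φ |G'|` divides `φ n` and is therefore coprime
to `n`; so this map is trivial and `G'` is central. Then `G ⧸ Z(G)` is a quotient of the cyclic
group `G ⧸ G'`, so `G` is abelian, and an abelian Z-group is cyclic.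
-/

theorem Nat.squarefree_of_coprime_totient {n : ℕ} (h : n.Coprime n.totient) : Squarefree n := by
  rw [Nat.squarefree_iff_prime_squarefree]
  rintro p hp ⟨m, rfl⟩
  have hp_dvd_totient : p ∣ (p * p * m).totient := by
    rw [mul_assoc, Nat.totient_mul_of_prime_of_dvd hp (dvd_mul_right p m)]
    exact dvd_mul_right _ _
  exact hp.one_lt.ne' (Nat.eq_one_of_dvd_coprimes h (dvd_mul_of_dvd_left (dvd_mul_right p p) m)
    hp_dvd_totient)

theorem MonoidHom.eq_one_of_coprime_card {G H : Type*} [Group G] [Group H] [Finite G] [Finite H]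
    (f : G →* H) (h : (Nat.card G).Coprime (Nat.card H)) (g : G) : f g = 1 :=
  orderOf_eq_one_iff.mp <| Nat.eq_one_of_dvd_coprimes h
    ((orderOf_map_dvd f g).trans (orderOf_dvd_natCard g)) (orderOf_dvd_natCard (f g))

theorem Subgroup.le_center_of_coprime_card_mulAut {G : Type*} [Group G] [Finite G]
    (K : Subgroup G) [K.Normal] (h : (Nat.card G).Coprime (Nat.card (MulAut K))) :
    K ≤ center G := by
  intro k hk
  refine mem_center_iff.mpr fun g ↦ mul_inv_eq_iff_eq_mul.mp ?_
  exact congrArg (fun σ : MulAut K ↦ (σ ⟨k, hk⟩ : G))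
    (MulAut.conjNormal.eq_one_of_coprime_card h g)

theorem IsZGroup.isCyclic_of_commutator_le_center {G : Type*} [Group G] [Finite G] [IsZGroup G]
    (h : commutator G ≤ Subgroup.center G) : IsCyclic G := by
  rw [← Abelianization.ker_of] at h
  let _ : CommGroup G := commGroupOfCyclicCenterQuotient Abelianization.of h
  exact IsCyclic.of_exponent_eq_card (IsZGroup.exponent_eq_card G)

theorem isCyclic_of_coprime_card_totient (G : Type*) [Group G] [Fintype G]
    (h : Nat.Coprime (Fintype.card G) (Nat.totient (Fintype.card G))) :
    IsCyclic G := by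
  rw [← Nat.card_eq_fintype_card] at h
  have : IsZGroup G := IsZGroup.of_squarefree (Nat.squarefree_of_coprime_totient h)
  have : IsCyclic (commutator G) := IsZGroup.isCyclic_commutator G
  refine IsZGroup.isCyclic_of_commutator_le_center
    ((commutator G).le_center_of_coprime_card_mulAut ?_)
  rw [IsCyclic.card_mulAut]
  exact h.coprime_dvd_right (Nat.totient_dvd_of_dvd (commutator G).card_subgroup_dvd_card)
end

section
/- A composite squarefree positive integer n satisfies b^n ≡ b (mod n) for all integers b if and only if (p − 1) divides (n − 1) for every prime p dividing n. -/
/-!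
Since `n` is squarefree, `n ∣ bⁿ - b` for all `b` exactly when this holds modulo every prime
`p ∣ n`, i.e. when `aⁿ = a` on `ZMod p`. As `n ≠ 0`, this says `a ^ (n - 1) = 1` on the cyclic
group `(ZMod p)ˣ` of order `p - 1`, i.e. `p - 1 ∣ n - 1`.
-/

theorem Squarefree.intCast_dvd_iff_forall_prime_dvd {n : ℕ} (hn : Squarefree n) (x : ℤ) :
    (n : ℤ) ∣ x ↔ ∀ p : ℕ, p.Prime → p ∣ n → (p : ℤ) ∣ x := by
  simp_rw [Int.natCast_dvd]
  refine ⟨fun h p _ hpn => hpn.trans h, fun h => ?_⟩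
  rw [← Nat.prod_primeFactors_of_squarefree hn]
  refine Finset.prod_primes_dvd _ (fun p hp => ?_) fun p hp => ?_
  · exact (Nat.prime_of_mem_primeFactors hp).prime
  · exact h p (Nat.prime_of_mem_primeFactors hp) (Nat.dvd_of_mem_primeFactors hp)

theorem ZMod.forall_pow_eq_self_iff_forall_dvd (m n : ℕ) :
    (∀ a : ZMod m, a ^ n = a) ↔ ∀ b : ℤ, (m : ℤ) ∣ b ^ n - b := by
  simp_rw [← ZMod.intCast_zmod_eq_zero_iff_dvd, Int.cast_sub, Int.cast_pow, sub_eq_zero]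
  exact ZMod.intCast_surjective.forall

theorem FiniteField.forall_pow_eq_self_iff {K : Type*} [Field K] [Fintype K] {n : ℕ}
    (hn : n ≠ 0) : (∀ a : K, a ^ n = a) ↔ Fintype.card K - 1 ∣ n - 1 := by
  have hsucc : n = n - 1 + 1 := (Nat.succ_pred_eq_of_ne_zero hn).symm
  rw [← FiniteField.forall_pow_eq_one_iff]
  constructor
  · intro h x
    refine Units.ext (mul_right_cancel₀ x.ne_zero ?_)
    rw [Units.val_pow_eq_pow_val, ← pow_succ, ← hsucc, h, Units.val_one, one_mul]
  · intro h a
    obtain rfl | ha := eq_or_ne a 0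
    · exact zero_pow hn
    · have := congrArg Units.val (h (Units.mk0 a ha))
      rw [Units.val_pow_eq_pow_val, Units.val_mk0, Units.val_one] at this
      rw [hsucc, pow_succ, this, one_mul]

theorem korselt_criterion_general (n : ℕ) (hsq : Squarefree n) :
    (∀ b : ℤ, (n : ℤ) ∣ b ^ n - b) ↔
      ∀ p : ℕ, p.Prime → p ∣ n → (p - 1) ∣ (n - 1) := by
  calc (∀ b : ℤ, (n : ℤ) ∣ b ^ n - b)
      ↔ ∀ p : ℕ, p.Prime → p ∣ n → ∀ b : ℤ, (p : ℤ) ∣ b ^ n - b := by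
        simp_rw [hsq.intCast_dvd_iff_forall_prime_dvd]
        exact ⟨fun h p hp hpn b => h b p hp hpn, fun h b p hp hpn => h p hp hpn b⟩
    _ ↔ ∀ p : ℕ, p.Prime → p ∣ n → (p - 1) ∣ (n - 1) := by
        refine forall_congr' fun p => forall_congr' fun hp => forall_congr' fun _ => ?_
        have : Fact p.Prime := ⟨hp⟩
        rw [← ZMod.forall_pow_eq_self_iff_forall_dvd, FiniteField.forall_pow_eq_self_iff hsq.ne_zero,
          ZMod.card]

theorem korselt_criterion (n : ℕ) (hsq : Squarefree n) (hcomp : 1 < n ∧ ¬ n.Prime) :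
    (∀ b : ℤ, (n : ℤ) ∣ b ^ n - b) ↔
      ∀ p : ℕ, p.Prime → p ∣ n → (p - 1) ∣ (n - 1) :=
  korselt_criterion_general n hsq
end

section
/- If n is a squarefree positive integer divisible by 3 and k·φ(n) = n − 1 for some positive integer k with n composite, then k ≡ 1 (mod 3). -/
/-!
Since `φ n ∣ n - 1`, every prime `p ∣ n` has `p - 1 = φ p ∣ n - 1 ≡ 2 (mod 3)`, so `3 ∤ p - 1`.
For `p ≠ 3` also `3 ∤ p`, which forces `p ≡ 2` and `p - 1 ≡ 1 (mod 3)`. As `n` is squarefree,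
`φ n = ∏ (p - 1) ≡ 3 - 1 = 2 (mod 3)`, and `k * φ n ≡ 2 (mod 3)` gives `k ≡ 1`.
-/

namespace Nat

theorem totient_eq_prod_primeFactors_sub_one {n : ℕ} (hn : Squarefree n) :
    φ n = ∏ p ∈ n.primeFactors, (p - 1) := by
  rw [totient_eq_div_primeFactors_mul, prod_primeFactors_of_squarefree hn,
    Nat.div_self (Nat.pos_of_ne_zero hn.ne_zero), one_mul]

theorem sub_one_dvd_sub_one_of_totient_dvd {n p : ℕ} (hp : p.Prime) (hpn : p ∣ n)
    (h : φ n ∣ n - 1) : p - 1 ∣ n - 1 := by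
  rw [← totient_prime hp]
  exact (totient_dvd_of_dvd hpn).trans h

theorem sub_one_mod_three_of_sub_one_dvd {n p : ℕ} (hp : p.Prime) (hp3 : p ≠ 3) (hn : n ≠ 0)
    (h3n : 3 ∣ n) (hpn : p - 1 ∣ n - 1) : (p - 1) % 3 = 1 := by
  have h3p : ¬ 3 ∣ p := fun h => hp3 ((prime_dvd_prime_iff_eq prime_three hp).mp h).symm
  have h3pn : ¬ 3 ∣ p - 1 := fun h => by
    have := h.trans hpn
    omega
  omega

theorem totient_mod_three_of_squarefree {n : ℕ} (hsq : Squarefree n) (h3n : 3 ∣ n)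
    (h : φ n ∣ n - 1) : φ n % 3 = 2 := by
  have hn : n ≠ 0 := hsq.ne_zero
  have h3 : 3 ∈ n.primeFactors := mem_primeFactors.mpr ⟨prime_three, h3n, hn⟩
  have hrest : (∏ p ∈ n.primeFactors.erase 3, (p - 1)) % 3 = 1 := by
    have hp_one : ∀ p ∈ n.primeFactors.erase 3, (p - 1) % 3 = 1 := by
      intro p hp
      obtain ⟨hp3, hp⟩ := Finset.mem_erase.mp hp
      have hp' := prime_of_mem_primeFactors hp
      exact sub_one_mod_three_of_sub_one_dvd hp' hp3 hn h3n
        (sub_one_dvd_sub_one_of_totient_dvd hp' (dvd_of_mem_primeFactors hp) h)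
    rw [Finset.prod_nat_mod, Finset.prod_congr rfl hp_one]
    simp
  rw [totient_eq_prod_primeFactors_sub_one hsq, ← Finset.mul_prod_erase _ _ h3, Nat.mul_mod,
    hrest]

end Nat

theorem k_mod_three_of_three_dvd_general (n k : ℕ) (hsq : Squarefree n) (h3 : 3 ∣ n)
    (h : k * Nat.totient n = n - 1) :
    k % 3 = 1 := by
  have hphi : Nat.totient n % 3 = 2 :=
    Nat.totient_mod_three_of_squarefree hsq h3 (Dvd.intro_left k h)
  have hn : (n - 1) % 3 = 2 := by
    have := hsq.ne_zero
    omega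
  rw [← h, Nat.mul_mod, hphi] at hn
  omega

theorem k_mod_three_of_three_dvd (n k : ℕ) (hsq : Squarefree n) (h3 : 3 ∣ n)
    (hcomp : 1 < n ∧ ¬ n.Prime) (hk : 0 < k) (h : k * Nat.totient n = n - 1) :
    k % 3 = 1 :=
  k_mod_three_of_three_dvd_general n k hsq h3 h
end
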